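/- arXiv:1604.00474 — 3 statements merged into one kernel-verified Lean document; each statement's English description precedes it below -/
import Mathlib

section
/- Let (M, λ_i) be an AP-space on ℝⁿ (n ≥ 2) and let λ̄_i = e^{−ρ} λ_i be a conformal change with smooth conformal factor ρ. Then the contortion tensors γ^α_{μν} := Γ^α_{μν} − Γ°^α_{μν} of the two AP-structures are related by γ̄^α_{μν} = γ^α_{μν} − δ^α_ν ρ_μ + g_{μν} ρ^α, where ρ_μ := ∂ρ/∂x^μ and ρ^α := g^{αε} ρ_ε. -/
open scoped BigOperators

noncomputable section

/-- Kronecker delta as a real number. -/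
def kron {n : ℕ} (α μ : Fin n) : ℝ := if α = μ then 1 else 0

/-- Partial derivative `∂_ν f` of a scalar function on ℝⁿ. -/
def pd {n : ℕ} (ν : Fin n) (f : (Fin n → ℝ) → ℝ) (x : Fin n → ℝ) : ℝ :=
  fderiv ℝ f x (Pi.single ν 1)

/-- Weitzenböck connection `Γ^α_{μν} = Σ_i λ_i^α ∂_ν λ_{i,μ}`. -/
def Wconn {n : ℕ} (lam lamCov : Fin n → (Fin n → ℝ) → Fin n → ℝ)
    (α μ ν : Fin n) (x : Fin n → ℝ) : ℝ :=
  ∑ i, lam i x α * pd ν (fun y => lamCov i y μ) x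

/-- Torsion `Λ^α_{μν}` of the Weitzenböck connection. -/
def tors {n : ℕ} (lam lamCov : Fin n → (Fin n → ℝ) → Fin n → ℝ)
    (α μ ν : Fin n) (x : Fin n → ℝ) : ℝ :=
  Wconn lam lamCov α μ ν x - Wconn lam lamCov α ν μ x

/-- Contracted torsion (basic vector) `C_μ = Λ^ε_{εμ}`. -/
def Cvec {n : ℕ} (lam lamCov : Fin n → (Fin n → ℝ) → Fin n → ℝ)
    (μ : Fin n) (x : Fin n → ℝ) : ℝ :=
  ∑ ε, tors lam lamCov ε ε μ x

/-- Metric `g_{μν} = Σ_i λ_{i,μ} λ_{i,ν}`. -/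
def gmet {n : ℕ} (lamCov : Fin n → (Fin n → ℝ) → Fin n → ℝ)
    (μ ν : Fin n) (x : Fin n → ℝ) : ℝ :=
  ∑ i, lamCov i x μ * lamCov i x ν

/-- Inverse metric `g^{μν} = Σ_i λ_i^μ λ_i^ν`. -/
def ginv {n : ℕ} (lam : Fin n → (Fin n → ℝ) → Fin n → ℝ)
    (μ ν : Fin n) (x : Fin n → ℝ) : ℝ :=
  ∑ i, lam i x μ * lam i x ν

/-- Levi-Civita connection (Christoffel symbols) of the metric `g`. -/
def LC {n : ℕ} (lam lamCov : Fin n → (Fin n → ℝ) → Fin n → ℝ)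
    (α μ ν : Fin n) (x : Fin n → ℝ) : ℝ :=
  (1/2) * ∑ ε, ginv lam α ε x *
    (pd μ (fun y => gmet lamCov ε ν y) x + pd ν (fun y => gmet lamCov ε μ y) x
      - pd ε (fun y => gmet lamCov μ ν y) x)

/-- Curvature tensor `R[A]^α_{μνσ}` of connection coefficients `A`. -/
def curv {n : ℕ} (A : Fin n → Fin n → Fin n → (Fin n → ℝ) → ℝ)
    (α μ ν σ : Fin n) (x : Fin n → ℝ) : ℝ :=
  pd ν (A α μ σ) x - pd σ (A α μ ν) x
    + ∑ ε, A ε μ σ x * A α ε ν x - ∑ ε, A ε μ ν x * A α ε σ x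

/-- Conformal change of the contravariant components: `λ̄_i^μ = e^{-ρ} λ_i^μ`. -/
def confLam {n : ℕ} (ρ : (Fin n → ℝ) → ℝ) (lam : Fin n → (Fin n → ℝ) → Fin n → ℝ) :
    Fin n → (Fin n → ℝ) → Fin n → ℝ :=
  fun i x μ => Real.exp (-(ρ x)) * lam i x μ

/-- Conformal change of the covariant components: `λ̄_{i,μ} = e^{ρ} λ_{i,μ}`. -/
def confLamCov {n : ℕ} (ρ : (Fin n → ℝ) → ℝ) (lamCov : Fin n → (Fin n → ℝ) → Fin n → ℝ) :
    Fin n → (Fin n → ℝ) → Fin n → ℝ :=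
  fun i x μ => Real.exp (ρ x) * lamCov i x μ

/-- `ρ^α := g^{αε} ρ_ε`. -/
def rhoUp {n : ℕ} (lam : Fin n → (Fin n → ℝ) → Fin n → ℝ) (ρ : (Fin n → ℝ) → ℝ)
    (α : Fin n) (x : Fin n → ℝ) : ℝ :=
  ∑ ε, ginv lam α ε x * pd ε ρ x

/-- `ρ² := ρ^ε ρ_ε`. -/
def rhoSq {n : ℕ} (lam : Fin n → (Fin n → ℝ) → Fin n → ℝ) (ρ : (Fin n → ℝ) → ℝ)
    (x : Fin n → ℝ) : ℝ :=
  ∑ ε, rhoUp lam ρ ε x * pd ε ρ x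

/-- Covariant derivative of a covector field: `X_{μ|ν} = ∂_ν X_μ − A^ε_{μν} X_ε`. -/
def covD {n : ℕ} (A : Fin n → Fin n → Fin n → (Fin n → ℝ) → ℝ)
    (X : Fin n → (Fin n → ℝ) → ℝ) (μ ν : Fin n) (x : Fin n → ℝ) : ℝ :=
  pd ν (X μ) x - ∑ ε, A ε μ ν x * X ε x

/-- Covariant derivative of a vector field: `X^α_{|ν} = ∂_ν X^α + A^α_{εν} X^ε`. -/
def covDUp {n : ℕ} (A : Fin n → Fin n → Fin n → (Fin n → ℝ) → ℝ)
    (X : Fin n → (Fin n → ℝ) → ℝ) (α ν : Fin n) (x : Fin n → ℝ) : ℝ :=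
  pd ν (X α) x + ∑ ε, A α ε ν x * X ε x

/-- Symmetric part `Γ̂^α_{μν}` of the Weitzenböck connection. -/
def symW {n : ℕ} (lam lamCov : Fin n → (Fin n → ℝ) → Fin n → ℝ)
    (α μ ν : Fin n) (x : Fin n → ℝ) : ℝ :=
  (1/2) * (Wconn lam lamCov α μ ν x + Wconn lam lamCov α ν μ x)

/-- The conformally invariant tensor `T^α_{μν}`. -/
def Ttens {n : ℕ} (lam lamCov : Fin n → (Fin n → ℝ) → Fin n → ℝ)
    (α μ ν : Fin n) (x : Fin n → ℝ) : ℝ :=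
  tors lam lamCov α μ ν x
    - ((n : ℝ) - 1)⁻¹ * (kron α μ * Cvec lam lamCov ν x - kron α ν * Cvec lam lamCov μ x)

/-- The conformally invariant tensor `K^α_{μνσ}`. -/
def Ktens {n : ℕ} (lam lamCov : Fin n → (Fin n → ℝ) → Fin n → ℝ)
    (α μ ν σ : Fin n) (x : Fin n → ℝ) : ℝ :=
  ((n : ℝ) - 1)⁻¹ *
    (kron α μ * pd σ (Cvec lam lamCov ν) x - kron α μ * pd ν (Cvec lam lamCov σ) x)

/-- The conformal connection `𝚪^α_{μν} = Γ^α_{μν} − (1/(n−1)) δ^α_μ C_ν`. -/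
def bConn {n : ℕ} (lam lamCov : Fin n → (Fin n → ℝ) → Fin n → ℝ)
    (α μ ν : Fin n) (x : Fin n → ℝ) : ℝ :=
  Wconn lam lamCov α μ ν x - ((n : ℝ) - 1)⁻¹ * (kron α μ * Cvec lam lamCov ν x)

/-- The conformal connection `𝚪̂^α_{μν} = Γ̂^α_{μν} − (1/(2(n−1)))(δ^α_μ C_ν + δ^α_ν C_μ)`. -/
def hatConn {n : ℕ} (lam lamCov : Fin n → (Fin n → ℝ) → Fin n → ℝ)
    (α μ ν : Fin n) (x : Fin n → ℝ) : ℝ :=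
  symW lam lamCov α μ ν x
    - (2 * ((n : ℝ) - 1))⁻¹ * (kron α μ * Cvec lam lamCov ν x + kron α ν * Cvec lam lamCov μ x)

/-- `C_{μ ĥ|ν}`: covariant derivative of `C` with respect to `Γ̂`. -/
def Chat {n : ℕ} (lam lamCov : Fin n → (Fin n → ℝ) → Fin n → ℝ)
    (μ ν : Fin n) (x : Fin n → ℝ) : ℝ :=
  covD (symW lam lamCov) (Cvec lam lamCov) μ ν x

/-- The conformally invariant tensor `B^α_{μνσ}`. -/
def Btens {n : ℕ} (lam lamCov : Fin n → (Fin n → ℝ) → Fin n → ℝ)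
    (α μ ν σ : Fin n) (x : Fin n → ℝ) : ℝ :=
  curv (symW lam lamCov) α μ ν σ x
    - (2 * ((n : ℝ) - 1))⁻¹ *
      (kron α μ * pd ν (Cvec lam lamCov σ) x - kron α μ * pd σ (Cvec lam lamCov ν) x
        + kron α σ * Chat lam lamCov μ ν x - kron α ν * Chat lam lamCov μ σ x
        - (2 * ((n : ℝ) - 1))⁻¹ * kron α ν * Cvec lam lamCov μ x * Cvec lam lamCov σ x
        + (2 * ((n : ℝ) - 1))⁻¹ * kron α σ * Cvec lam lamCov μ x * Cvec lam lamCov ν x)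

/-- `C^σ := g^{σε} C_ε`. -/
def Cup {n : ℕ} (lam lamCov : Fin n → (Fin n → ℝ) → Fin n → ℝ)
    (σ : Fin n) (x : Fin n → ℝ) : ℝ :=
  ∑ ε, ginv lam σ ε x * Cvec lam lamCov ε x

/-- `C² := C_ε C^ε = g^{εη} C_ε C_η`. -/
def Csq {n : ℕ} (lam lamCov : Fin n → (Fin n → ℝ) → Fin n → ℝ)
    (x : Fin n → ℝ) : ℝ :=
  ∑ ε, Cvec lam lamCov ε x * Cup lam lamCov ε x

/-- The tensor `S_{μν} := ρ_{μ;ν} − ρ_μ ρ_ν − ½ g_{μν} ρ²`. -/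
def Stens {n : ℕ} (lam lamCov : Fin n → (Fin n → ℝ) → Fin n → ℝ)
    (ρ : (Fin n → ℝ) → ℝ) (μ ν : Fin n) (x : Fin n → ℝ) : ℝ :=
  covD (LC lam lamCov) (fun μ => pd μ ρ) μ ν x
    - pd μ ρ x * pd ν ρ x - (1/2) * gmet lamCov μ ν x * rhoSq lam ρ x

/-- The conformal connection `𝚪°^α_{μν} = Γ°^α_{μν} − (1/(n−1))(δ^α_μ C_ν + δ^α_ν C_μ − g_{μν} C^α)`. -/
def oConn {n : ℕ} (lam lamCov : Fin n → (Fin n → ℝ) → Fin n → ℝ)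
    (α μ ν : Fin n) (x : Fin n → ℝ) : ℝ :=
  LC lam lamCov α μ ν x
    - ((n : ℝ) - 1)⁻¹ *
      (kron α μ * Cvec lam lamCov ν x + kron α ν * Cvec lam lamCov μ x
        - gmet lamCov μ ν x * Cup lam lamCov α x)

end
namespace APaux

lemma pd_mul {n : ℕ} (ν : Fin n) (f g : (Fin n → ℝ) → ℝ) (x : Fin n → ℝ)
    (hf : DifferentiableAt ℝ f x) (hg : DifferentiableAt ℝ g x) :
    pd ν (fun y => f y * g y) x = pd ν f x * g x + f x * pd ν g x := by
  unfold pd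
  rw [fderiv_fun_mul hf hg]
  simp only [ContinuousLinearMap.add_apply, ContinuousLinearMap.smul_apply, smul_eq_mul]
  ring

lemma pd_exp {n : ℕ} (ν : Fin n) (f : (Fin n → ℝ) → ℝ) (x : Fin n → ℝ)
    (hf : DifferentiableAt ℝ f x) :
    pd ν (fun y => Real.exp (f y)) x = Real.exp (f x) * pd ν f x := by
  unfold pd
  rw [hf.hasFDerivAt.exp.fderiv]
  simp

lemma pd_const_mul {n : ℕ} (ν : Fin n) (c : ℝ) (f : (Fin n → ℝ) → ℝ) (x : Fin n → ℝ)
    (hf : DifferentiableAt ℝ f x) :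
    pd ν (fun y => c * f y) x = c * pd ν f x := by
  unfold pd
  rw [fderiv_const_mul hf]
  simp

end APaux

theorem contortion_conformal_change
    {n : ℕ} (hn : 2 ≤ n)
    (lam lamCov : Fin n → (Fin n → ℝ) → Fin n → ℝ)
    (hlam : ∀ i μ, ContDiff ℝ (⊤ : ℕ∞) fun x => lam i x μ)
    (hlamCov : ∀ i μ, ContDiff ℝ (⊤ : ℕ∞) fun x => lamCov i x μ)
    (hinv : ∀ (x : Fin n → ℝ) (μ ν : Fin n), ∑ i, lam i x μ * lamCov i x ν = kron μ ν)
    (hinv' : ∀ (x : Fin n → ℝ) (i j : Fin n), ∑ μ, lam i x μ * lamCov j x μ = kron i j)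
    (ρ : (Fin n → ℝ) → ℝ) (hρ : ContDiff ℝ (⊤ : ℕ∞) ρ)
    :
    ∀ (x : Fin n → ℝ) (α μ ν : Fin n),
      Wconn (confLam ρ lam) (confLamCov ρ lamCov) α μ ν x
          - LC (confLam ρ lam) (confLamCov ρ lamCov) α μ ν x
        = (Wconn lam lamCov α μ ν x - LC lam lamCov α μ ν x)
            - kron α ν * pd μ ρ x + gmet lamCov μ ν x * rhoUp lam ρ α x := by
  -- basic differentiability facts
  have hρd : ∀ x, DifferentiableAt ℝ ρ x := fun x => (hρ.differentiable (by simp)).differentiableAt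
  have hLCd : ∀ i μ x, DifferentiableAt ℝ (fun y => lamCov i y μ) x := fun i μ x =>
    ((hlamCov i μ).differentiable (by simp)).differentiableAt
  have hgd : ∀ ε η (x : Fin n → ℝ), DifferentiableAt ℝ (fun y => gmet lamCov ε η y) x := by
    intro ε η x
    have : (fun y => gmet lamCov ε η y) = fun y => ∑ i, lamCov i y ε * lamCov i y η := rfl
    rw [this]
    exact DifferentiableAt.fun_sum fun i _ => (hLCd i ε x).mul (hLCd i η x)
  -- contraction lemma  g^{αε} g_{εν} = δ^α_ν
  have hgg : ∀ (x : Fin n → ℝ) (α ν : Fin n),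
      ∑ ε, ginv lam α ε x * gmet lamCov ε ν x = kron α ν := by
    intro x α ν
    unfold ginv gmet
    calc ∑ ε, (∑ i, lam i x α * lam i x ε) * ∑ j, lamCov j x ε * lamCov j x ν
        = ∑ ε, ∑ j, ∑ i, (lam i x α * lamCov j x ν) * (lam i x ε * lamCov j x ε) := by
          simp only [Finset.sum_mul, Finset.mul_sum]
          refine Finset.sum_congr rfl fun ε _ => Finset.sum_congr rfl fun j _ =>
            Finset.sum_congr rfl fun i _ => by ring
      _ = ∑ j, ∑ i, (lam i x α * lamCov j x ν) * ∑ ε, lam i x ε * lamCov j x ε := by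
          rw [Finset.sum_comm]
          refine Finset.sum_congr rfl fun j _ => ?_
          rw [Finset.sum_comm]
          exact Finset.sum_congr rfl fun i _ => (Finset.mul_sum _ _ _).symm
      _ = ∑ j, ∑ i, (lam i x α * lamCov j x ν) * kron i j := by
          refine Finset.sum_congr rfl fun j _ => Finset.sum_congr rfl fun i _ => ?_
          rw [hinv' x i j]
      _ = ∑ j, lam j x α * lamCov j x ν := by
          refine Finset.sum_congr rfl fun j _ => ?_
          simp [kron, mul_ite]
      _ = kron α ν := hinv x α ν
  intro x α μ ν
  -- Step A: conformal Weitzenböck connection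
  have hW : Wconn (confLam ρ lam) (confLamCov ρ lamCov) α μ ν x
      = Wconn lam lamCov α μ ν x + kron α μ * pd ν ρ x := by
    unfold Wconn confLam confLamCov
    have hterm : ∀ i : Fin n,
        Real.exp (-(ρ x)) * lam i x α * pd ν (fun y => Real.exp (ρ y) * lamCov i y μ) x
        = lam i x α * pd ν (fun y => lamCov i y μ) x
          + (lam i x α * lamCov i x μ) * pd ν ρ x := by
      intro i
      rw [APaux.pd_mul ν _ _ x ((hρd x).exp) (hLCd i μ x), APaux.pd_exp ν ρ x (hρd x)]
      have h1 : Real.exp (-(ρ x)) * Real.exp (ρ x) = 1 := by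
        rw [← Real.exp_add]; simp
      linear_combination (lam i x α *
        (pd ν ρ x * lamCov i x μ + pd ν (fun y => lamCov i y μ) x)) * h1
    calc ∑ i, Real.exp (-(ρ x)) * lam i x α * pd ν (fun y => Real.exp (ρ y) * lamCov i y μ) x
        = ∑ i, (lam i x α * pd ν (fun y => lamCov i y μ) x
            + (lam i x α * lamCov i x μ) * pd ν ρ x) :=
          Finset.sum_congr rfl fun i _ => hterm i
      _ = Wconn lam lamCov α μ ν x + kron α μ * pd ν ρ x := by
          rw [Finset.sum_add_distrib, ← Finset.sum_mul, hinv x α μ]; rfl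
  -- conformal metric
  have hgbar : ∀ (ε η : Fin n), (fun y => gmet (confLamCov ρ lamCov) ε η y)
      = fun y => Real.exp (2 * ρ y) * gmet lamCov ε η y := by
    intro ε η
    funext y
    unfold gmet confLamCov
    rw [Finset.mul_sum]
    refine Finset.sum_congr rfl fun i _ => ?_
    rw [two_mul, Real.exp_add]; ring
  -- derivative of conformal metric
  have hpdg : ∀ (σ ε η : Fin n),
      pd σ (fun y => gmet (confLamCov ρ lamCov) ε η y) x
      = Real.exp (2 * ρ x) * (2 * pd σ ρ x * gmet lamCov ε η x
          + pd σ (fun y => gmet lamCov ε η y) x) := by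
    intro σ ε η
    rw [hgbar ε η, APaux.pd_mul σ _ _ x (((hρd x).const_mul 2).exp) (hgd ε η x),
      APaux.pd_exp σ _ x ((hρd x).const_mul 2), APaux.pd_const_mul σ 2 ρ x (hρd x)]
    ring
  -- conformal inverse metric
  have hginvbar : ∀ ε : Fin n, ginv (confLam ρ lam) α ε x
      = Real.exp (-(2 * ρ x)) * ginv lam α ε x := by
    intro ε
    unfold ginv confLam
    rw [Finset.mul_sum]
    refine Finset.sum_congr rfl fun i _ => ?_
    rw [show -(2 * ρ x) = -(ρ x) + -(ρ x) by ring, Real.exp_add]; ring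
  have hee : Real.exp (-(2 * ρ x)) * Real.exp (2 * ρ x) = 1 := by
    rw [← Real.exp_add]; simp
  -- Step B: conformal Levi-Civita connection
  have hLC : LC (confLam ρ lam) (confLamCov ρ lamCov) α μ ν x
      = LC lam lamCov α μ ν x + pd μ ρ x * kron α ν + pd ν ρ x * kron α μ
        - gmet lamCov μ ν x * rhoUp lam ρ α x := by
    have hterm : ∀ ε : Fin n,
        ginv (confLam ρ lam) α ε x *
          (pd μ (fun y => gmet (confLamCov ρ lamCov) ε ν y) x
            + pd ν (fun y => gmet (confLamCov ρ lamCov) ε μ y) x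
            - pd ε (fun y => gmet (confLamCov ρ lamCov) μ ν y) x)
        = ginv lam α ε x *
            (pd μ (fun y => gmet lamCov ε ν y) x + pd ν (fun y => gmet lamCov ε μ y) x
              - pd ε (fun y => gmet lamCov μ ν y) x)
          + 2 * pd μ ρ x * (ginv lam α ε x * gmet lamCov ε ν x)
          + 2 * pd ν ρ x * (ginv lam α ε x * gmet lamCov ε μ x)
          - 2 * gmet lamCov μ ν x * (ginv lam α ε x * pd ε ρ x) := by
      intro ε
      rw [hginvbar ε, hpdg μ ε ν, hpdg ν ε μ, hpdg ε μ ν]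
      linear_combination (ginv lam α ε x *
        (2 * pd μ ρ x * gmet lamCov ε ν x + pd μ (fun y => gmet lamCov ε ν y) x
          + 2 * pd ν ρ x * gmet lamCov ε μ x + pd ν (fun y => gmet lamCov ε μ y) x
          - 2 * pd ε ρ x * gmet lamCov μ ν x - pd ε (fun y => gmet lamCov μ ν y) x)) * hee
    unfold LC
    rw [Finset.sum_congr rfl fun ε _ => hterm ε]
    simp only [Finset.sum_add_distrib, Finset.sum_sub_distrib, ← Finset.mul_sum]
    rw [hgg x α ν, hgg x α μ]
    unfold rhoUp
    ring
  rw [hW, hLC]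
  ring
end

section
/- Let (M, λ_i) be an AP-space on ℝⁿ with n ≥ 2. The tensor T^α_{μν} := Λ^α_{μν} − (1/(n−1))(δ^α_μ C_ν − δ^α_ν C_μ) is conformally invariant: for every conformal change λ̄_i = e^{−ρ} λ_i with smooth ρ, the tensor T̄ built from the λ̄_i equals T. -/
open scoped BigOperators

section Aux

variable {n : ℕ}

lemma pd_mul (ν : Fin n) (f g : (Fin n → ℝ) → ℝ) (x : Fin n → ℝ)
    (hf : DifferentiableAt ℝ f x) (hg : DifferentiableAt ℝ g x) :
    pd ν (fun y => f y * g y) x = pd ν f x * g x + f x * pd ν g x := by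
  unfold pd
  rw [fderiv_fun_mul hf hg]
  simp only [ContinuousLinearMap.add_apply, ContinuousLinearMap.smul_apply, smul_eq_mul]
  ring

lemma pd_exp (ν : Fin n) (ρ : (Fin n → ℝ) → ℝ) (x : Fin n → ℝ)
    (hρ : DifferentiableAt ℝ ρ x) :
    pd ν (fun y => Real.exp (ρ y)) x = Real.exp (ρ x) * pd ν ρ x := by
  unfold pd
  rw [fderiv_exp hρ]
  simp

lemma Wconn_conf (lam lamCov : Fin n → (Fin n → ℝ) → Fin n → ℝ)
    (hlamCov : ∀ i μ, ContDiff ℝ (⊤ : ℕ∞) fun x => lamCov i x μ)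
    (hinv : ∀ (x : Fin n → ℝ) (μ ν : Fin n), ∑ i, lam i x μ * lamCov i x ν = kron μ ν)
    (ρ : (Fin n → ℝ) → ℝ) (hρ : ContDiff ℝ (⊤ : ℕ∞) ρ)
    (α μ ν : Fin n) (x : Fin n → ℝ) :
    Wconn (confLam ρ lam) (confLamCov ρ lamCov) α μ ν x
      = Wconn lam lamCov α μ ν x + kron α μ * pd ν ρ x := by
  have hρd : DifferentiableAt ℝ ρ x := (hρ.differentiable (by simp)) x
  unfold Wconn confLam confLamCov
  have key : ∀ i : Fin n,
      (Real.exp (-(ρ x)) * lam i x α) * pd ν (fun y => Real.exp (ρ y) * lamCov i y μ) x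
        = lam i x α * pd ν (fun y => lamCov i y μ) x
          + pd ν ρ x * (lam i x α * lamCov i x μ) := by
    intro i
    have hcov : DifferentiableAt ℝ (fun y => lamCov i y μ) x :=
      ((hlamCov i μ).differentiable (by simp)) x
    have hexp : DifferentiableAt ℝ (fun y => Real.exp (ρ y)) x :=
      (Real.differentiable_exp.differentiableAt).comp x hρd
    rw [pd_mul ν _ _ x hexp hcov, pd_exp ν ρ x hρd]
    have hee : Real.exp (-(ρ x)) * Real.exp (ρ x) = 1 := by
      rw [← Real.exp_add]; simp
    calc Real.exp (-(ρ x)) * lam i x α *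
          (Real.exp (ρ x) * pd ν ρ x * lamCov i x μ
            + Real.exp (ρ x) * pd ν (fun y => lamCov i y μ) x)
        = (Real.exp (-(ρ x)) * Real.exp (ρ x)) *
            (lam i x α * pd ν (fun y => lamCov i y μ) x
              + pd ν ρ x * (lam i x α * lamCov i x μ)) := by ring
      _ = _ := by rw [hee]; ring
  rw [Finset.sum_congr rfl (fun i _ => key i), Finset.sum_add_distrib,
    ← Finset.mul_sum, hinv x α μ]
  ring

lemma tors_conf (lam lamCov : Fin n → (Fin n → ℝ) → Fin n → ℝ)
    (hlamCov : ∀ i μ, ContDiff ℝ (⊤ : ℕ∞) fun x => lamCov i x μ)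
    (hinv : ∀ (x : Fin n → ℝ) (μ ν : Fin n), ∑ i, lam i x μ * lamCov i x ν = kron μ ν)
    (ρ : (Fin n → ℝ) → ℝ) (hρ : ContDiff ℝ (⊤ : ℕ∞) ρ)
    (α μ ν : Fin n) (x : Fin n → ℝ) :
    tors (confLam ρ lam) (confLamCov ρ lamCov) α μ ν x
      = tors lam lamCov α μ ν x + kron α μ * pd ν ρ x - kron α ν * pd μ ρ x := by
  unfold tors
  rw [Wconn_conf lam lamCov hlamCov hinv ρ hρ α μ ν x,
    Wconn_conf lam lamCov hlamCov hinv ρ hρ α ν μ x]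
  ring

lemma Cvec_conf (lam lamCov : Fin n → (Fin n → ℝ) → Fin n → ℝ)
    (hlamCov : ∀ i μ, ContDiff ℝ (⊤ : ℕ∞) fun x => lamCov i x μ)
    (hinv : ∀ (x : Fin n → ℝ) (μ ν : Fin n), ∑ i, lam i x μ * lamCov i x ν = kron μ ν)
    (ρ : (Fin n → ℝ) → ℝ) (hρ : ContDiff ℝ (⊤ : ℕ∞) ρ)
    (μ : Fin n) (x : Fin n → ℝ) :
    Cvec (confLam ρ lam) (confLamCov ρ lamCov) μ x
      = Cvec lam lamCov μ x + ((n : ℝ) - 1) * pd μ ρ x := by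
  unfold Cvec
  rw [Finset.sum_congr rfl (fun ε _ => tors_conf lam lamCov hlamCov hinv ρ hρ ε ε μ x)]
  have h1 : ∀ ε : Fin n, kron ε ε = (1 : ℝ) := fun ε => if_pos rfl
  have h2 : ∑ ε : Fin n, kron ε μ * pd ε ρ x = pd μ ρ x := by
    rw [Finset.sum_eq_single μ]
    · simp [kron]
    · intro b _ hb; simp [kron, hb]
    · simp
  simp only [Finset.sum_add_distrib, Finset.sum_sub_distrib, h2]
  simp only [h1, one_mul, Finset.sum_const, Finset.card_univ, Fintype.card_fin,
    nsmul_eq_mul]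
  ring

end Aux

theorem Ttens_conformally_invariant
    {n : ℕ} (hn : 2 ≤ n)
    (lam lamCov : Fin n → (Fin n → ℝ) → Fin n → ℝ)
    (hlam : ∀ i μ, ContDiff ℝ (⊤ : ℕ∞) fun x => lam i x μ)
    (hlamCov : ∀ i μ, ContDiff ℝ (⊤ : ℕ∞) fun x => lamCov i x μ)
    (hinv : ∀ (x : Fin n → ℝ) (μ ν : Fin n), ∑ i, lam i x μ * lamCov i x ν = kron μ ν)
    (hinv' : ∀ (x : Fin n → ℝ) (i j : Fin n), ∑ μ, lam i x μ * lamCov j x μ = kron i j)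
    :
    ∀ (ρ : (Fin n → ℝ) → ℝ), ContDiff ℝ (⊤ : ℕ∞) ρ →
      ∀ (x : Fin n → ℝ) (α μ ν : Fin n),
        Ttens (confLam ρ lam) (confLamCov ρ lamCov) α μ ν x
          = Ttens lam lamCov α μ ν x := by
  intro ρ hρ x α μ ν
  have hne : ((n : ℝ) - 1) ≠ 0 := by
    have : (2 : ℝ) ≤ (n : ℝ) := by exact_mod_cast hn
    linarith
  unfold Ttens
  rw [tors_conf lam lamCov hlamCov hinv ρ hρ α μ ν x,
    Cvec_conf lam lamCov hlamCov hinv ρ hρ ν x,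
    Cvec_conf lam lamCov hlamCov hinv ρ hρ μ x]
  field_simp
  ring
end

section
/- Let (M, λ_i) be an AP-space on ℝⁿ with n ≥ 2. The curvature tensor of the connection 𝚪̂^α_{μν} := Γ̂^α_{μν} − (1/(2(n−1)))(δ^α_μ C_ν + δ^α_ν C_μ) equals the tensor B, i.e. ∂_ν 𝚪̂^α_{μσ} − ∂_σ 𝚪̂^α_{μν} + 𝚪̂^ε_{μσ} 𝚪̂^α_{εν} − 𝚪̂^ε_{μν} 𝚪̂^α_{εσ} = B^α_{μνσ} := R̂^α_{μνσ} − (1/(2(n−1))) { δ^α_μ ∂_ν C_σ − δ^α_μ ∂_σ C_ν + δ^α_σ C_{μ ĥ|ν} − δ^α_ν C_{μ ĥ|σ} − (1/(2(n−1))) δ^α_ν C_μ C_σ + (1/(2(n−1))) δ^α_σ C_μ C_ν }. -/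
open scoped BigOperators

section Aux
variable {n : ℕ}

lemma contDiff_pd (ν : Fin n) {f : (Fin n → ℝ) → ℝ} (hf : ContDiff ℝ (⊤ : ℕ∞) f) :
    ContDiff ℝ (⊤ : ℕ∞) (pd ν f) :=
  (hf.fderiv_right (by simp)).clm_apply contDiff_const

lemma pd_sub (ν : Fin n) {f g : (Fin n → ℝ) → ℝ} {x}
    (hf : DifferentiableAt ℝ f x) (hg : DifferentiableAt ℝ g x) :
    pd ν (fun y => f y - g y) x = pd ν f x - pd ν g x := by
  simp [pd, fderiv_fun_sub hf hg]

lemma pd_const_mul (ν : Fin n) {f : (Fin n → ℝ) → ℝ} {x} (c : ℝ)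
    (hf : DifferentiableAt ℝ f x) :
    pd ν (fun y => c * f y) x = c * pd ν f x := by
  simp [pd, fderiv_const_mul hf c]

lemma sum_kron_left (μ : Fin n) (f : Fin n → ℝ) : ∑ ε, kron ε μ * f ε = f μ := by
  simp [kron, ite_mul]

lemma sum_kron_right (α : Fin n) (f : Fin n → ℝ) : ∑ ε, kron α ε * f ε = f α := by
  simp [kron, ite_mul]

lemma quad (A : Fin n → Fin n → Fin n → ℝ) (C : Fin n → ℝ) (c : ℝ) (α μ ν σ : Fin n) :
    ∑ ε, (A ε μ σ - c * (kron ε μ * C σ + kron ε σ * C μ)) *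
        (A α ε ν - c * (kron α ε * C ν + kron α ν * C ε))
    = ∑ ε, A ε μ σ * A α ε ν
      - c * C ν * A α μ σ - c * kron α ν * ∑ ε, A ε μ σ * C ε
      - c * C σ * A α μ ν - c * C μ * A α σ ν
      + c^2 * C σ * C ν * kron α μ + c^2 * kron α ν * C σ * C μ
      + c^2 * C μ * C ν * kron α σ + c^2 * kron α ν * C μ * C σ := by
  have h : ∀ ε : Fin n, (A ε μ σ - c * (kron ε μ * C σ + kron ε σ * C μ)) *
        (A α ε ν - c * (kron α ε * C ν + kron α ν * C ε))
      = A ε μ σ * A α ε ν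
        - (c * C ν) * (kron α ε * A ε μ σ)
        - (c * kron α ν) * (A ε μ σ * C ε)
        - (c * C σ) * (kron ε μ * A α ε ν)
        - (c * C μ) * (kron ε σ * A α ε ν)
        + (c^2 * C σ * C ν) * (kron ε μ * kron α ε)
        + (c^2 * kron α ν * C σ) * (kron ε μ * C ε)
        + (c^2 * C μ * C ν) * (kron ε σ * kron α ε)
        + (c^2 * kron α ν * C μ) * (kron ε σ * C ε) := by
    intro ε; ring
  rw [Finset.sum_congr rfl (fun ε _ => h ε)]
  simp only [Finset.sum_add_distrib, Finset.sum_sub_distrib, ← Finset.mul_sum,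
    sum_kron_left, sum_kron_right]

lemma symW_symm (lam lamCov : Fin n → (Fin n → ℝ) → Fin n → ℝ) (α μ ν : Fin n) (x) :
    symW lam lamCov α μ ν x = symW lam lamCov α ν μ x := by
  simp [symW]; ring

lemma contDiff_Wconn (lam lamCov : Fin n → (Fin n → ℝ) → Fin n → ℝ)
    (hlam : ∀ i μ, ContDiff ℝ (⊤ : ℕ∞) fun x => lam i x μ)
    (hlamCov : ∀ i μ, ContDiff ℝ (⊤ : ℕ∞) fun x => lamCov i x μ) (α μ ν : Fin n) :
    ContDiff ℝ (⊤ : ℕ∞) fun x => Wconn lam lamCov α μ ν x := by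
  unfold Wconn
  exact ContDiff.sum fun i _ => (hlam i α).mul (contDiff_pd ν (hlamCov i μ))

lemma contDiff_symW (lam lamCov : Fin n → (Fin n → ℝ) → Fin n → ℝ)
    (hlam : ∀ i μ, ContDiff ℝ (⊤ : ℕ∞) fun x => lam i x μ)
    (hlamCov : ∀ i μ, ContDiff ℝ (⊤ : ℕ∞) fun x => lamCov i x μ) (α μ ν : Fin n) :
    ContDiff ℝ (⊤ : ℕ∞) fun x => symW lam lamCov α μ ν x := by
  unfold symW
  exact contDiff_const.mul ((contDiff_Wconn lam lamCov hlam hlamCov α μ ν).add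
    (contDiff_Wconn lam lamCov hlam hlamCov α ν μ))

lemma contDiff_Cvec (lam lamCov : Fin n → (Fin n → ℝ) → Fin n → ℝ)
    (hlam : ∀ i μ, ContDiff ℝ (⊤ : ℕ∞) fun x => lam i x μ)
    (hlamCov : ∀ i μ, ContDiff ℝ (⊤ : ℕ∞) fun x => lamCov i x μ) (μ : Fin n) :
    ContDiff ℝ (⊤ : ℕ∞) fun x => Cvec lam lamCov μ x := by
  unfold Cvec tors
  exact ContDiff.sum fun ε _ => (contDiff_Wconn lam lamCov hlam hlamCov ε ε μ).sub
    (contDiff_Wconn lam lamCov hlam hlamCov ε μ ε)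

end Aux
theorem hatConn_curvature_eq_Btens
    {n : ℕ} (hn : 2 ≤ n)
    (lam lamCov : Fin n → (Fin n → ℝ) → Fin n → ℝ)
    (hlam : ∀ i μ, ContDiff ℝ (⊤ : ℕ∞) fun x => lam i x μ)
    (hlamCov : ∀ i μ, ContDiff ℝ (⊤ : ℕ∞) fun x => lamCov i x μ)
    (hinv : ∀ (x : Fin n → ℝ) (μ ν : Fin n), ∑ i, lam i x μ * lamCov i x ν = kron μ ν)
    (hinv' : ∀ (x : Fin n → ℝ) (i j : Fin n), ∑ μ, lam i x μ * lamCov j x μ = kron i j)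
    :
    ∀ (x : Fin n → ℝ) (α μ ν σ : Fin n),
      curv (hatConn lam lamCov) α μ ν σ x = Btens lam lamCov α μ ν σ x := by
  intro x α μ ν σ
  set c : ℝ := (2 * ((n : ℝ) - 1))⁻¹ with hc
  have hdS : ∀ (α μ ν : Fin n) (y : Fin n → ℝ),
      DifferentiableAt ℝ (symW lam lamCov α μ ν) y := fun α μ ν y =>
    ((contDiff_symW lam lamCov hlam hlamCov α μ ν).differentiable (by simp)).differentiableAt
  have hdC : ∀ (μ : Fin n) (y : Fin n → ℝ),
      DifferentiableAt ℝ (Cvec lam lamCov μ) y := fun μ y =>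
    ((contDiff_Cvec lam lamCov hlam hlamCov μ).differentiable (by simp)).differentiableAt
  have hpd : ∀ (α μ σ ν : Fin n),
      pd ν (hatConn lam lamCov α μ σ) x
        = pd ν (symW lam lamCov α μ σ) x
          - c * kron α μ * pd ν (Cvec lam lamCov σ) x
          - c * kron α σ * pd ν (Cvec lam lamCov μ) x := by
    intro α μ σ ν
    have e : hatConn lam lamCov α μ σ = fun y =>
        (fun z => symW lam lamCov α μ σ z - (c * kron α μ) * Cvec lam lamCov σ z) y
          - (c * kron α σ) * Cvec lam lamCov μ y := by
      funext y; simp only [hatConn, hc]; ring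
    rw [e, pd_sub ν (f := fun z => symW lam lamCov α μ σ z - (c * kron α μ) * Cvec lam lamCov σ z)
      (g := fun y => (c * kron α σ) * Cvec lam lamCov μ y) (((hdS α μ σ x)).sub ((hdC σ x).const_mul _)) ((hdC μ x).const_mul _),
      pd_sub ν (f := symW lam lamCov α μ σ) (g := fun y => (c * kron α μ) * Cvec lam lamCov σ y)
        (hdS α μ σ x) ((hdC σ x).const_mul _),
      pd_const_mul ν _ (hdC σ x), pd_const_mul ν _ (hdC μ x)]
  have hq : ∀ (μ ν σ : Fin n),
      ∑ ε, (symW lam lamCov ε μ σ x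
              - c * (kron ε μ * Cvec lam lamCov σ x + kron ε σ * Cvec lam lamCov μ x)) *
            (symW lam lamCov α ε ν x
              - c * (kron α ε * Cvec lam lamCov ν x + kron α ν * Cvec lam lamCov ε x))
      = ∑ ε, symW lam lamCov ε μ σ x * symW lam lamCov α ε ν x
        - c * Cvec lam lamCov ν x * symW lam lamCov α μ σ x
        - c * kron α ν * ∑ ε, symW lam lamCov ε μ σ x * Cvec lam lamCov ε x
        - c * Cvec lam lamCov σ x * symW lam lamCov α μ ν x
        - c * Cvec lam lamCov μ x * symW lam lamCov α σ ν x
        + c^2 * Cvec lam lamCov σ x * Cvec lam lamCov ν x * kron α μ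
        + c^2 * kron α ν * Cvec lam lamCov σ x * Cvec lam lamCov μ x
        + c^2 * Cvec lam lamCov μ x * Cvec lam lamCov ν x * kron α σ
        + c^2 * kron α ν * Cvec lam lamCov μ x * Cvec lam lamCov σ x :=
    fun μ ν σ => quad (fun a b c' => symW lam lamCov a b c' x)
      (fun a => Cvec lam lamCov a x) c α μ ν σ
  simp only [curv, Btens, Chat, covD, hatConn, ← hc]
  rw [hpd α μ σ ν, hpd α μ ν σ, hq μ ν σ, hq μ σ ν,
    symW_symm lam lamCov α σ ν, symW_symm lam lamCov α ν σ]
  ring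
end
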